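/- Let 𝒢 be a real Hilbert space, let φ ∈ Γ₀(𝒢), and set C = {(μ, u) ∈ ℝ × 𝒢 : μ + φ*(u) ≤ 0}. Then the Fenchel conjugate of the perspective φ̃ is the indicator function ι_C of C, and φ̃ is the support function σ_C of C, i.e., φ̃(η, y) = sup_{(μ,u) ∈ C} (ημ + ⟨y, u⟩) for all (η, y) ∈ ℝ × 𝒢. -/

import Mathlib

open scoped RealInnerProductSpace Classical

noncomputable section

/-- Properness for extended-real-valued functions. -/
def IsProperE {G : Type*} (f : G → EReal) : Prop :=
  (∀ x, f x ≠ ⊥) ∧ ∃ x, f x ≠ ⊤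

/-- Convexity for extended-real-valued functions. -/
def ConvexE (G : Type*) [AddCommGroup G] [Module ℝ G] (f : G → EReal) : Prop :=
  ∀ x y : G, ∀ a b : ℝ, 0 ≤ a → 0 ≤ b → a + b = 1 →
    f (a • x + b • y) ≤ (a : EReal) * f x + (b : EReal) * f y

/-- The class Γ₀: proper, lower semicontinuous, convex. -/
def Gamma0 (G : Type*) [AddCommGroup G] [Module ℝ G] [TopologicalSpace G]
    (f : G → EReal) : Prop :=
  IsProperE f ∧ LowerSemicontinuous f ∧ ConvexE G f

/-- The recession function. -/
def recFn {G : Type*} [AddCommGroup G] (f : G → EReal) (y : G) : EReal :=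
  ⨆ x : {x : G // f x ≠ ⊤}, (f ((x : G) + y) - f (x : G))

/-- The perspective function. -/
def persp {G : Type*} [AddCommGroup G] [Module ℝ G] (f : G → EReal) : ℝ × G → EReal :=
  fun p => if 0 < p.1 then (p.1 : EReal) * f (p.1⁻¹ • p.2)
           else if p.1 = 0 then recFn f p.2 else ⊤

/-- The Fenchel conjugate. -/
def conjFn {G : Type*} [NormedAddCommGroup G] [InnerProductSpace ℝ G]
    (f : G → EReal) (u : G) : EReal :=
  ⨆ x : G, (((inner ℝ x u : ℝ) : EReal) - f x)

/-- The support function of a set. -/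
def suppFn {G : Type*} [NormedAddCommGroup G] [InnerProductSpace ℝ G]
    (D : Set G) (y : G) : EReal :=
  ⨆ u ∈ D, ((inner ℝ y u : ℝ) : EReal)

/-- The convex subdifferential. -/
def subdiff {G : Type*} [NormedAddCommGroup G] [InnerProductSpace ℝ G]
    (f : G → EReal) (x : G) : Set G :=
  {u | ∀ z : G, (((inner ℝ (z - x) u : ℝ) : EReal) + f x ≤ f z)}

namespace PerspAux

/-! ### EReal helper lemmas -/

lemma le_of_forall_coe_lt {x y : EReal} (h : ∀ r : ℝ, (r:EReal) < x → (r:EReal) ≤ y) : x ≤ y := by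
  by_contra hc
  push_neg at hc
  obtain ⟨r, hyr, hrx⟩ := EReal.exists_between_coe_real hc
  exact absurd (h r hrx) (not_le.2 hyr)

lemma coe_sub_eq {a : ℝ} {b : ℝ} : (a:EReal) - (b:EReal) = ((a - b : ℝ):EReal) := (EReal.coe_sub a b).symm

lemma sub_le_coe_iff {a b : ℝ} {c : EReal} : (a:EReal) - c ≤ (b:EReal) ↔ ((a - b : ℝ):EReal) ≤ c := by
  induction c using EReal.rec with
  | bot =>
      rw [EReal.coe_sub_bot]
      simp only [top_le_iff, le_bot_iff]
      exact ⟨fun h => absurd h (EReal.coe_ne_top _), fun h => absurd h (EReal.coe_ne_bot _)⟩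
  | coe c =>
      rw [coe_sub_eq, EReal.coe_le_coe_iff, EReal.coe_le_coe_iff]
      constructor <;> (intro h; linarith)
  | top => simp [EReal.sub_top]

lemma coe_le_sub_iff {a b : ℝ} {c : EReal} : (a:EReal) ≤ c - (b:EReal) ↔ ((a + b : ℝ):EReal) ≤ c := by
  induction c using EReal.rec with
  | bot => simp [EReal.bot_sub]
  | coe c =>
      rw [coe_sub_eq, EReal.coe_le_coe_iff, EReal.coe_le_coe_iff]
      constructor <;> (intro h; linarith)
  | top =>
      rw [EReal.top_sub_coe]
      simp only [le_top, iff_true, top_le_iff]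

lemma sub_coe_le_iff {a b : ℝ} {c : EReal} : c - (b:EReal) ≤ (a:EReal) ↔ c ≤ ((a + b : ℝ):EReal) := by
  induction c using EReal.rec with
  | bot => simp [EReal.bot_sub]
  | coe c =>
      rw [coe_sub_eq, EReal.coe_le_coe_iff, EReal.coe_le_coe_iff]
      constructor <;> (intro h; linarith)
  | top =>
      rw [EReal.top_sub_coe]
      simp only [top_le_iff]
      exact iff_of_false (EReal.coe_ne_top _) (EReal.coe_ne_top _)

lemma coe_lt_sub_iff {a b : ℝ} {c : EReal} : (b:EReal) < (a:EReal) - c ↔ c < ((a - b : ℝ):EReal) := by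
  rw [← not_le, ← not_le, sub_le_coe_iff]

lemma ereal_cases (x : EReal) : x = ⊥ ∨ x = ⊤ ∨ ∃ b : ℝ, x = (b:EReal) := by
  induction x using EReal.rec with
  | bot => exact Or.inl rfl
  | coe b => exact Or.inr (Or.inr ⟨b, rfl⟩)
  | top => exact Or.inr (Or.inl rfl)

lemma coe_sub_le_coe_sub {a : ℝ} {c d : EReal} (h : c ≤ d) : (a:EReal) - d ≤ (a:EReal) - c := by
  induction d using EReal.rec with
  | bot => rw [le_bot_iff.mp h]
  | coe d =>
      induction c using EReal.rec with
      | bot => simp [EReal.sub_bot]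
      | coe c =>
          rw [coe_sub_eq, coe_sub_eq, EReal.coe_le_coe_iff]
          have := EReal.coe_le_coe_iff.mp h
          linarith
      | top => exact absurd h (by simp)
  | top => simp [EReal.sub_top]

/-! ### Separation machinery -/

variable {G : Type*} [NormedAddCommGroup G] [InnerProductSpace ℝ G] [CompleteSpace G]
variable {φ : G → EReal}

lemma functional_decomp (f : (G × ℝ) →L[ℝ] ℝ) :
    ∃ u : G, ∃ s : ℝ, ∀ x : G, ∀ t : ℝ, f (x, t) = (inner ℝ x u : ℝ) + t * s := by
  refine ⟨(InnerProductSpace.toDual ℝ G).symm (f.comp (ContinuousLinearMap.inl ℝ G ℝ)), f (0, 1),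
    fun x t => ?_⟩
  have h1 : (inner ℝ x ((InnerProductSpace.toDual ℝ G).symm (f.comp (ContinuousLinearMap.inl ℝ G ℝ))) : ℝ)
      = f (x, 0) := by
    rw [real_inner_comm]
    rw [InnerProductSpace.toDual_symm_apply]
    rfl
  have h2 : (x, t) = (x, (0:ℝ)) + t • ((0:G), (1:ℝ)) := by
    simp [Prod.ext_iff]
  rw [h1, h2, map_add, map_smul]
  simp [smul_eq_mul]

lemma epi_closed (hlsc : LowerSemicontinuous φ) :
    IsClosed {p : G × ℝ | φ p.1 ≤ (p.2 : EReal)} := by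
  have h := hlsc.isClosed_epigraph
  have : {p : G × ℝ | φ p.1 ≤ (p.2 : EReal)}
      = (fun p : G × ℝ => (p.1, (p.2 : EReal))) ⁻¹' {q : G × EReal | φ q.1 ≤ q.2} := rfl
  rw [this]
  exact h.preimage (continuous_fst.prodMk (continuous_coe_real_ereal.comp continuous_snd))

lemma epi_convex (hcv : ConvexE G φ) :
    Convex ℝ {p : G × ℝ | φ p.1 ≤ (p.2 : EReal)} := by
  rintro ⟨x, t⟩ hx ⟨y, r⟩ hy a b ha hb' hab
  simp only [Set.mem_setOf_eq] at hx hy ⊢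
  have h1 : φ (a • x + b • y) ≤ (a : EReal) * φ x + (b : EReal) * φ y := hcv x y a b ha hb' hab
  have h2 : (a : EReal) * φ x ≤ (a : EReal) * (t : EReal) :=
    mul_le_mul_of_nonneg_left hx (by exact_mod_cast ha)
  have h3 : (b : EReal) * φ y ≤ (b : EReal) * (r : EReal) :=
    mul_le_mul_of_nonneg_left hy (by exact_mod_cast hb')
  calc φ (a • x + b • y) ≤ (a : EReal) * (t:EReal) + (b : EReal) * (r:EReal) :=
        h1.trans (add_le_add h2 h3)
    _ = (((a • (x, t) + b • (y, r) : G × ℝ).2 : ℝ) : EReal) := by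
        norm_num [Prod.smul_snd, smul_eq_mul]

/-- Separation of a point strictly below the epigraph. -/
lemma sep_epi (hb : ∀ x, φ x ≠ ⊥) (hne : ∃ x, φ x ≠ ⊤) (hlsc : LowerSemicontinuous φ)
    (hcv : ConvexE G φ) (x₀ : G) (r : ℝ) (hr : (r : EReal) < φ x₀) :
    ∃ u : G, ∃ s c : ℝ, ((inner ℝ x₀ u : ℝ) + r * s < c) ∧ 0 ≤ s ∧
      ∀ z : G, ∀ t : ℝ, φ z ≤ (t : EReal) → c < (inner ℝ z u : ℝ) + t * s := by
  obtain ⟨xb, hxb⟩ := hne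
  have hxbr : φ xb = ((φ xb).toReal : EReal) := (EReal.coe_toReal hxb (hb xb)).symm
  have hnotin : (x₀, r) ∉ {p : G × ℝ | φ p.1 ≤ (p.2 : EReal)} := fun h => absurd hr (not_lt.2 h)
  obtain ⟨f, c, hfx, hfs⟩ := geometric_hahn_banach_point_closed
    (epi_convex hcv) (epi_closed hlsc) hnotin
  obtain ⟨u, s, hdec⟩ := functional_decomp f
  rw [hdec] at hfx
  have key : ∀ z : G, ∀ t : ℝ, φ z ≤ (t : EReal) → c < (inner ℝ z u : ℝ) + t * s := by
    intro z t hzt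
    have := hfs (z, t) hzt
    rwa [hdec] at this
  refine ⟨u, s, c, hfx, ?_, key⟩
  by_contra hs
  push_neg at hs
  obtain ⟨n, hn⟩ := exists_nat_gt (((inner ℝ xb u : ℝ) + (φ xb).toReal * s - c) / (-s))
  have hmem' : φ xb ≤ (((φ xb).toReal + n : ℝ) : EReal) :=
    hxbr.le.trans (EReal.coe_le_coe_iff.mpr (by linarith [Nat.cast_nonneg (α := ℝ) n]))
  have := key xb ((φ xb).toReal + n) hmem'
  have hlt : ((inner ℝ xb u : ℝ) + (φ xb).toReal * s - c) / (-s) < n := hn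
  rw [div_lt_iff₀ (by linarith)] at hlt
  nlinarith

/-! ### Conjugate basics -/

lemma fenchelYoung (φ : G → EReal) (x u : G) :
    ((inner ℝ x u : ℝ) : EReal) - φ x ≤ conjFn φ u :=
  le_iSup (fun z : G => ((inner ℝ z u : ℝ) : EReal) - φ z) x

lemma conj_ne_bot (hp : IsProperE φ) (u : G) : conjFn φ u ≠ ⊥ := by
  obtain ⟨hb, x, hx⟩ := hp
  intro hbot
  have h := (fenchelYoung φ x u).trans_eq hbot
  rw [le_bot_iff] at h
  have hxr : φ x = ((φ x).toReal : EReal) := (EReal.coe_toReal hx (hb x)).symm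
  rw [hxr, coe_sub_eq] at h
  exact EReal.coe_ne_bot _ h

/-- From a separating functional with positive slope, a bound on the conjugate. -/
lemma conj_le_of_key (hb : ∀ x, φ x ≠ ⊥) {u : G} {s c : ℝ} (hs : 0 < s)
    (key : ∀ z : G, ∀ t : ℝ, φ z ≤ (t:EReal) → c < (inner ℝ z u : ℝ) + t * s) :
    conjFn φ ((-s⁻¹) • u) ≤ (((- c)/s : ℝ) : EReal) := by
  apply iSup_le
  intro z
  rcases ereal_cases (φ z) with hz | hz | ⟨b, hz⟩
  · exact absurd hz (hb z)
  · rw [hz, EReal.sub_top]; exact bot_le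
  · have hk := key z b (le_of_eq hz)
    rw [hz, coe_sub_eq, EReal.coe_le_coe_iff, real_inner_smul_right, le_div_iff₀ hs]
    have hexp : (-s⁻¹ * (inner ℝ z u : ℝ) - b) * s = -(inner ℝ z u : ℝ) - b * s := by
      field_simp
    rw [hexp]
    linarith

/-- The domain of the conjugate is nonempty. -/
lemma conj_dom_nonempty (hφ : Gamma0 G φ) : ∃ u : G, conjFn φ u ≠ ⊤ := by
  obtain ⟨⟨hb, xb, hxb⟩, hlsc, hcv⟩ := hφ
  set tb := (φ xb).toReal with htb
  have hxbr : φ xb = (tb : EReal) := (EReal.coe_toReal hxb (hb xb)).symm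
  have hr : ((tb - 1 : ℝ) : EReal) < φ xb := by
    rw [hxbr]; exact EReal.coe_lt_coe_iff.mpr (by linarith)
  obtain ⟨u, s, c, hfx, hs0, key⟩ := sep_epi hb ⟨xb, hxb⟩ hlsc hcv xb (tb - 1) hr
  have hkb := key xb tb (le_of_eq hxbr)
  have hs : 0 < s := by nlinarith
  exact ⟨(-s⁻¹) • u, ne_top_of_le_ne_top (EReal.coe_ne_top _) (conj_le_of_key hb hs key)⟩

/-! ### Biconjugate -/

lemma biconj_le (hb : ∀ x, φ x ≠ ⊥) (hp : IsProperE φ) (x u : G) :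
    ((inner ℝ x u : ℝ) : EReal) - conjFn φ u ≤ φ x := by
  have h := fenchelYoung φ x u
  rcases ereal_cases (conjFn φ u) with hc | hc | ⟨d, hc⟩
  · exact absurd hc (conj_ne_bot hp u)
  · rw [hc, EReal.sub_top]; exact bot_le
  · rw [hc] at h ⊢
    rw [coe_sub_eq]
    exact sub_le_coe_iff.mp h

lemma biconj_ge (hφ : Gamma0 G φ) (x : G) :
    φ x ≤ ⨆ u : G, (((inner ℝ x u : ℝ) : EReal) - conjFn φ u) := by
  obtain ⟨⟨hb, hne⟩, hlsc, hcv⟩ := hφ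
  by_contra hcon
  push_neg at hcon
  obtain ⟨r, hSr, hrφ⟩ := EReal.exists_between_coe_real hcon
  obtain ⟨u, s, c, hfx, hs0, key⟩ := sep_epi hb hne hlsc hcv x r hrφ
  rcases lt_or_eq_of_le hs0 with hs | hs
  · -- s > 0
    set u' := (-s⁻¹) • u with hu'
    have hconj : conjFn φ u' ≤ (((-c)/s : ℝ) : EReal) := conj_le_of_key hb hs key
    have hterm : (r : EReal) < ((inner ℝ x u' : ℝ) : EReal) - conjFn φ u' := by
      calc (r : EReal) < (((inner ℝ x u' : ℝ) - (-c)/s : ℝ) : EReal) := by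
            rw [EReal.coe_lt_coe_iff, hu', real_inner_smul_right]
            have heq : (-s⁻¹) * (inner ℝ x u : ℝ) - (-c)/s = (c - (inner ℝ x u : ℝ))/s := by
              field_simp
              ring
            rw [heq, lt_div_iff₀ hs]
            nlinarith
        _ = ((inner ℝ x u' : ℝ) : EReal) - (((-c)/s : ℝ) : EReal) := coe_sub_eq.symm
        _ ≤ ((inner ℝ x u' : ℝ) : EReal) - conjFn φ u' := coe_sub_le_coe_sub hconj
    have hle : ((inner ℝ x u' : ℝ) : EReal) - conjFn φ u' ≤ ⨆ v : G, (((inner ℝ x v : ℝ) : EReal) - conjFn φ v) :=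
      le_iSup (fun v : G => ((inner ℝ x v : ℝ) : EReal) - conjFn φ v) u'
    exact absurd (hterm.trans_le (hle.trans hSr.le)) (lt_irrefl _)
  · -- s = 0
    subst hs
    simp only [mul_zero, add_zero] at hfx key
    -- c < ⟪z, u⟫ for every z in the domain, and ⟪x,u⟫ < c
    obtain ⟨u₀, hu₀⟩ := conj_dom_nonempty ⟨⟨hb, hne⟩, hlsc, hcv⟩
    set d₀ := (conjFn φ u₀).toReal with hd₀
    have hc₀ : conjFn φ u₀ = (d₀ : EReal) := (EReal.coe_toReal hu₀ (conj_ne_bot ⟨hb, hne⟩ u₀)).symm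
    have hgap : 0 < c - (inner ℝ x u : ℝ) := by linarith
    obtain ⟨n, hn⟩ := exists_nat_gt ((r - (inner ℝ x u₀ : ℝ) + d₀) / (c - (inner ℝ x u : ℝ)))
    set t : ℝ := (n : ℝ) with ht
    have htnn : 0 ≤ t := Nat.cast_nonneg n
    set ut := u₀ - t • u with hut
    have hconj : conjFn φ ut ≤ ((d₀ - t * c : ℝ) : EReal) := by
      apply iSup_le
      intro z
      rcases ereal_cases (φ z) with hz | hz | ⟨b, hz⟩
      · exact absurd hz (hb z)
      · rw [hz, EReal.sub_top]; exact bot_le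
      · have h1 : ((inner ℝ z u₀ : ℝ) : EReal) - φ z ≤ conjFn φ u₀ := fenchelYoung φ z u₀
        rw [hz, hc₀, coe_sub_eq, EReal.coe_le_coe_iff] at h1
        have h2 : c < (inner ℝ z u : ℝ) := key z b (le_of_eq hz)
        rw [hz, coe_sub_eq, EReal.coe_le_coe_iff, hut, inner_sub_right, real_inner_smul_right]
        nlinarith
    have hterm : (r : EReal) < ((inner ℝ x ut : ℝ) : EReal) - conjFn φ ut := by
      calc (r : EReal) < (((inner ℝ x ut : ℝ) - (d₀ - t * c) : ℝ) : EReal) := by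
            rw [EReal.coe_lt_coe_iff, hut, inner_sub_right, real_inner_smul_right]
            have hn' : (r - (inner ℝ x u₀ : ℝ) + d₀) < t * (c - (inner ℝ x u : ℝ)) := by
              rw [ht]
              calc (r - (inner ℝ x u₀ : ℝ) + d₀)
                  = ((r - (inner ℝ x u₀ : ℝ) + d₀) / (c - (inner ℝ x u : ℝ))) * (c - (inner ℝ x u : ℝ)) := by
                    field_simp
                _ < n * (c - (inner ℝ x u : ℝ)) := by
                    apply mul_lt_mul_of_pos_right hn hgap
            nlinarith
        _ = ((inner ℝ x ut : ℝ) : EReal) - ((d₀ - t * c : ℝ) : EReal) := coe_sub_eq.symm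
        _ ≤ ((inner ℝ x ut : ℝ) : EReal) - conjFn φ ut := coe_sub_le_coe_sub hconj
    have hle : ((inner ℝ x ut : ℝ) : EReal) - conjFn φ ut ≤ ⨆ v : G, (((inner ℝ x v : ℝ) : EReal) - conjFn φ v) :=
      le_iSup (fun v : G => ((inner ℝ x v : ℝ) : EReal) - conjFn φ v) ut
    exact absurd (hterm.trans_le (hle.trans hSr.le)) (lt_irrefl _)

/-! ### Recession function lemmas -/

lemma rec_ge_inner (hp : IsProperE φ) {u : G} (hu : conjFn φ u ≠ ⊤) (y : G) :
    ((inner ℝ y u : ℝ) : EReal) ≤ recFn φ y := by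
  obtain ⟨hb, hne⟩ := hp
  have hcb : conjFn φ u ≠ ⊥ := conj_ne_bot ⟨hb, hne⟩ u
  set cu := (conjFn φ u).toReal with hcu
  have hc : conjFn φ u = (cu : EReal) := (EReal.coe_toReal hu hcb).symm
  apply le_of_forall_coe_lt
  intro r hr
  rw [EReal.coe_lt_coe_iff] at hr
  set ε := (inner ℝ y u : ℝ) - r with hε
  have hε0 : 0 < ε := sub_pos.mpr hr
  have hlt : ((cu - ε : ℝ) : EReal) < conjFn φ u := by
    rw [hc, EReal.coe_lt_coe_iff]; linarith
  rw [conjFn, lt_iSup_iff] at hlt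
  obtain ⟨x, hx⟩ := hlt
  rcases ereal_cases (φ x) with hbx | htx | ⟨b, hbx⟩
  · exact absurd hbx (hb x)
  · rw [htx, EReal.sub_top] at hx; exact absurd hx not_lt_bot
  · rw [hbx, coe_sub_eq, EReal.coe_lt_coe_iff] at hx
    have hφxy : (((inner ℝ (x+y) u : ℝ) - cu : ℝ) : EReal) ≤ φ (x + y) := by
      have h := fenchelYoung φ (x+y) u
      rw [hc] at h
      exact sub_le_coe_iff.mp h
    have hxt : φ x ≠ ⊤ := by rw [hbx]; exact EReal.coe_ne_top b
    have hterm : (r : EReal) ≤ φ (x + y) - φ x := by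
      rw [hbx, coe_le_sub_iff]
      refine le_trans ?_ hφxy
      rw [EReal.coe_le_coe_iff, inner_add_left]
      linarith
    exact hterm.trans (le_iSup (fun x : {x : G // φ x ≠ ⊤} => φ ((x:G) + y) - φ (x:G)) ⟨x, hxt⟩)

lemma recFn_zero (hp : IsProperE φ) : recFn φ 0 = 0 := by
  obtain ⟨hb, x₀, hx₀⟩ := hp
  have hz : ∀ x : {x : G // φ x ≠ ⊤}, φ ((x:G) + 0) - φ (x:G) = 0 := by
    rintro ⟨x, hx⟩
    rcases ereal_cases (φ x) with h | h | ⟨b, h⟩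
    · exact absurd h (hb x)
    · exact absurd h hx
    · simp only [add_zero, h, coe_sub_eq, sub_self, EReal.coe_zero]
  haveI : Nonempty {x : G // φ x ≠ ⊤} := ⟨⟨x₀, hx₀⟩⟩
  rw [recFn]
  exact (iSup_congr hz).trans iSup_const

/-! ### Perspective unfolding lemmas -/

lemma persp_pos {f : G → EReal} {η : ℝ} (hη : 0 < η) (y : G) :
    persp f (η, y) = (η : EReal) * f (η⁻¹ • y) := by
  simp only [persp]
  rw [if_pos hη]

lemma persp_zero (f : G → EReal) (y : G) : persp f ((0:ℝ), y) = recFn f y := by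
  simp only [persp]
  norm_num

lemma persp_neg {f : G → EReal} {η : ℝ} (hη : η < 0) (y : G) : persp f (η, y) = ⊤ := by
  simp only [persp]
  rw [if_neg (not_lt.mpr hη.le), if_neg hη.ne]

end PerspAux

open PerspAux in
/-- with `C = {(μ,u) : μ + φ*(u) ≤ 0}`, the Fenchel conjugate of
the perspective `φ̃` is the indicator of `C`, and `φ̃` is the support function
of `C`. -/
theorem perspective_conjugate_and_support
    {G : Type*} [NormedAddCommGroup G] [InnerProductSpace ℝ G] [CompleteSpace G]
    (φ : G → EReal) (hφ : Gamma0 G φ)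
    (C : Set (ℝ × G)) (hC : C = {m : ℝ × G | (m.1 : EReal) + conjFn φ m.2 ≤ 0}) :
    (∀ m : ℝ × G,
        (⨆ p : ℝ × G, (((p.1 * m.1 + inner ℝ p.2 m.2 : ℝ)) : EReal) - persp φ p)
          = if m ∈ C then (0 : EReal) else ⊤) ∧
    (∀ (η : ℝ) (y : G),
        persp φ (η, y) = ⨆ m ∈ C, (((η * m.1 + inner ℝ y m.2 : ℝ)) : EReal)) := by
  obtain ⟨⟨hb, hne⟩, hlsc, hcv⟩ := hφ
  have hprop : IsProperE φ := ⟨hb, hne⟩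
  have hG0 : Gamma0 G φ := ⟨hprop, hlsc, hcv⟩
  constructor
  · -- Part 1: conjugate of the perspective is the indicator of C
    rintro ⟨μ, u⟩
    by_cases hm : ((μ : ℝ), u) ∈ C
    · rw [if_pos hm, hC] at *
      simp only [Set.mem_setOf_eq] at hm
      have hcnb : conjFn φ u ≠ ⊥ := conj_ne_bot hprop u
      have hcnt : conjFn φ u ≠ ⊤ := by
        intro h
        rw [h, EReal.add_top_of_ne_bot (EReal.coe_ne_bot μ)] at hm
        exact absurd hm (by simp)
      set d := (conjFn φ u).toReal with hdd
      have hcd : conjFn φ u = (d : EReal) := (EReal.coe_toReal hcnt hcnb).symm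
      have hmd : μ + d ≤ 0 := by
        rw [hcd, ← EReal.coe_add] at hm
        exact_mod_cast hm
      apply le_antisymm
      · apply iSup_le
        rintro ⟨η, y⟩
        rcases lt_trichotomy 0 η with hη | hη | hη
        · rw [persp_pos hη]
          rcases ereal_cases (φ (η⁻¹ • y)) with h | h | ⟨b, h⟩
          · exact absurd h (hb _)
          · rw [h, EReal.coe_mul_top_of_pos hη, EReal.sub_top]; exact bot_le
          · rw [h, ← EReal.coe_mul, coe_sub_eq, ← EReal.coe_zero, EReal.coe_le_coe_iff]
            have hFY : (inner ℝ (η⁻¹ • y) u : ℝ) - b ≤ d := by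
              have h2 := fenchelYoung φ (η⁻¹ • y) u
              rw [h, coe_sub_eq, hcd, EReal.coe_le_coe_iff] at h2
              exact h2
            have hyy : (inner ℝ y u : ℝ) = η * (inner ℝ (η⁻¹ • y) u : ℝ) := by
              rw [real_inner_smul_left]
              field_simp
            rw [hyy]
            nlinarith
        · subst hη
          rw [persp_zero]
          have hrec : ((inner ℝ y u : ℝ) : EReal) ≤ recFn φ y := rec_ge_inner hprop hcnt y
          have h0 : ((0:ℝ) * μ + (inner ℝ y u : ℝ)) = (inner ℝ y u : ℝ) := by ring
          rw [h0, ← EReal.coe_zero, sub_le_coe_iff]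
          simpa using hrec
        · rw [persp_neg hη, EReal.sub_top]
          exact bot_le
      · refine le_iSup_of_le (((0:ℝ), (0:G)) : ℝ × G) ?_
        rw [persp_zero, recFn_zero hprop]
        simp only [inner_zero_left, zero_mul, add_zero, EReal.coe_zero, sub_zero, le_refl]
    · rw [if_neg hm, hC] at *
      simp only [Set.mem_setOf_eq] at hm
      push_neg at hm
      rw [eq_top_iff]
      apply le_of_forall_coe_lt
      intro r _
      rcases ereal_cases (conjFn φ u) with hcb | hct | ⟨d, hcd⟩
      · exact absurd hcb (conj_ne_bot hprop u)
      · -- conjugate is +∞ : use slope-1 points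
        have hlt : ((r - μ : ℝ) : EReal) < conjFn φ u := by
          rw [hct]; exact EReal.coe_lt_top _
        rw [conjFn, lt_iSup_iff] at hlt
        obtain ⟨x, hx⟩ := hlt
        rcases ereal_cases (φ x) with h | h | ⟨b, h⟩
        · exact absurd h (hb x)
        · rw [h, EReal.sub_top] at hx; exact absurd hx not_lt_bot
        · rw [h, coe_sub_eq, EReal.coe_lt_coe_iff] at hx
          refine le_iSup_of_le (((1:ℝ), x) : ℝ × G) ?_
          rw [persp_pos one_pos, inv_one, one_smul, h, one_mul, ← EReal.coe_mul, coe_sub_eq,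
            EReal.coe_le_coe_iff, one_mul]
          linarith
      · -- conjugate is finite: use large η
        have hmd : 0 < μ + d := by
          rw [hcd, ← EReal.coe_add] at hm
          exact EReal.coe_pos.mp hm
        have hlt : ((d - (μ + d)/2 : ℝ) : EReal) < conjFn φ u := by
          rw [hcd, EReal.coe_lt_coe_iff]; linarith
        rw [conjFn, lt_iSup_iff] at hlt
        obtain ⟨x, hx⟩ := hlt
        rcases ereal_cases (φ x) with h | h | ⟨b, h⟩
        · exact absurd h (hb x)
        · rw [h, EReal.sub_top] at hx; exact absurd hx not_lt_bot
        · rw [h, coe_sub_eq, EReal.coe_lt_coe_iff] at hx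
          set e := μ + (inner ℝ x u : ℝ) - b with he
          have he0 : 0 < e := by rw [he]; linarith
          set η := max 1 ((r+1)/e) with hηdef
          have hη : 0 < η := lt_of_lt_of_le one_pos (le_max_left _ _)
          refine le_iSup_of_le ((η, η • x) : ℝ × G) ?_
          have hinvsmul : η⁻¹ • (η • x) = x := by
            rw [smul_smul, inv_mul_cancel₀ (ne_of_gt hη), one_smul]
          rw [persp_pos hη, hinvsmul, h, ← EReal.coe_mul, coe_sub_eq, EReal.coe_le_coe_iff,
            real_inner_smul_left]
          have hre : r + 1 ≤ η * e := by
            have h1 := mul_le_mul_of_nonneg_right (le_max_right 1 ((r+1)/e)) (le_of_lt he0)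
            rwa [div_mul_cancel₀ _ (ne_of_gt he0)] at h1
          have hee : η * μ + η * (inner ℝ x u : ℝ) - η * b = η * e := by rw [he]; ring
          linarith
  · -- Part 2: the perspective is the support function of C
    intro η y
    rcases lt_trichotomy 0 η with hη | hη | hη
    · -- η > 0
      rw [persp_pos hη]
      set x₀ := η⁻¹ • y with hx₀
      apply le_antisymm
      · apply le_of_forall_coe_lt
        intro r hr
        have hφx₀ : ((r/η : ℝ) : EReal) < φ x₀ := by
          rcases ereal_cases (φ x₀) with h | h | ⟨b, h⟩
          · rw [h, EReal.coe_mul_bot_of_pos hη] at hr; exact absurd hr not_lt_bot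
          · rw [h]; exact EReal.coe_lt_top _
          · rw [h, ← EReal.coe_mul, EReal.coe_lt_coe_iff] at hr
            rw [h, EReal.coe_lt_coe_iff, div_lt_iff₀ hη]
            linarith [mul_comm η b]
        have hbic := hφx₀.trans_le (biconj_ge hG0 x₀)
        rw [lt_iSup_iff] at hbic
        obtain ⟨u, hu⟩ := hbic
        have hcnb := conj_ne_bot hprop u
        have hcnt : conjFn φ u ≠ ⊤ := by
          intro h; rw [h, EReal.sub_top] at hu; exact absurd hu not_lt_bot
        set d := (conjFn φ u).toReal with hdd
        have hcd : conjFn φ u = (d : EReal) := (EReal.coe_toReal hcnt hcnb).symm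
        rw [hcd, coe_sub_eq, EReal.coe_lt_coe_iff] at hu
        have hmC : (((-d : ℝ), u) : ℝ × G) ∈ C := by
          rw [hC]
          simp only [Set.mem_setOf_eq]
          rw [hcd, ← EReal.coe_add, ← EReal.coe_zero, EReal.coe_le_coe_iff]
          linarith
        refine le_trans ?_ (le_biSup _ hmC)
        have hyu : (inner ℝ y u : ℝ) = η * (inner ℝ x₀ u : ℝ) := by
          rw [hx₀, real_inner_smul_left]
          field_simp
        have h2 := (div_lt_iff₀ hη).mp hu
        show (r : EReal) ≤ ((η * (-d) + (inner ℝ y u : ℝ) : ℝ) : EReal)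
        rw [EReal.coe_le_coe_iff, hyu]
        nlinarith
      · apply iSup₂_le
        rintro ⟨μ, u⟩ hm
        rw [hC] at hm
        simp only [Set.mem_setOf_eq] at hm
        have hcnb := conj_ne_bot hprop u
        have hcnt : conjFn φ u ≠ ⊤ := by
          intro h
          rw [h, EReal.add_top_of_ne_bot (EReal.coe_ne_bot μ)] at hm
          exact absurd hm (by simp)
        set d := (conjFn φ u).toReal with hdd
        have hcd : conjFn φ u = (d : EReal) := (EReal.coe_toReal hcnt hcnb).symm
        have hmd : μ + d ≤ 0 := by
          rw [hcd, ← EReal.coe_add] at hm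
          exact_mod_cast hm
        have hFY : (((inner ℝ x₀ u : ℝ) - d : ℝ) : EReal) ≤ φ x₀ := by
          have h2 := fenchelYoung φ x₀ u
          rw [hcd] at h2
          exact sub_le_coe_iff.mp h2
        have hyu : (inner ℝ y u : ℝ) = η * (inner ℝ x₀ u : ℝ) := by
          rw [hx₀, real_inner_smul_left]
          field_simp
        calc ((η * μ + (inner ℝ y u : ℝ) : ℝ) : EReal)
            ≤ ((η * ((inner ℝ x₀ u : ℝ) - d) : ℝ) : EReal) := by
              rw [EReal.coe_le_coe_iff, hyu]; nlinarith
          _ = (η : EReal) * (((inner ℝ x₀ u : ℝ) - d : ℝ) : EReal) := EReal.coe_mul _ _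
          _ ≤ (η : EReal) * φ x₀ :=
              mul_le_mul_of_nonneg_left hFY (by exact_mod_cast hη.le)
    · -- η = 0
      subst hη
      rw [persp_zero]
      apply le_antisymm
      · rw [recFn]
        apply iSup_le
        rintro ⟨x, hx⟩
        simp only
        rcases ereal_cases (φ x) with h | h | ⟨b, h⟩
        · exact absurd h (hb x)
        · exact absurd h hx
        · have hbc : φ (x + y) ≤ (⨆ m ∈ C, (((0 * m.1 + inner ℝ y m.2 : ℝ)) : EReal)) + φ x := by
            refine (biconj_ge hG0 (x + y)).trans ?_
            apply iSup_le
            intro u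
            rcases ereal_cases (conjFn φ u) with hcb | hct | ⟨d, hcd⟩
            · exact absurd hcb (conj_ne_bot hprop u)
            · rw [hct, EReal.sub_top]; exact bot_le
            · have hmC : (((-d : ℝ), u) : ℝ × G) ∈ C := by
                rw [hC]
                simp only [Set.mem_setOf_eq]
                rw [hcd, ← EReal.coe_add, ← EReal.coe_zero, EReal.coe_le_coe_iff]
                linarith
              have hyS : (((0 * (-d) + inner ℝ y u : ℝ)) : EReal)
                  ≤ ⨆ m ∈ C, (((0 * m.1 + inner ℝ y m.2 : ℝ)) : EReal) :=
                le_biSup (fun m : ℝ × G => (((0 * m.1 + inner ℝ y m.2 : ℝ)) : EReal)) hmC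
              have hFY : (((inner ℝ x u : ℝ) - d : ℝ) : EReal) ≤ φ x := by
                have h2 := fenchelYoung φ x u
                rw [hcd] at h2
                exact sub_le_coe_iff.mp h2
              calc ((inner ℝ (x + y) u : ℝ) : EReal) - conjFn φ u
                  = (((0 * (-d) + inner ℝ y u : ℝ) + ((inner ℝ x u : ℝ) - d) : ℝ) : EReal) := by
                    rw [hcd, coe_sub_eq]
                    congr 1
                    rw [inner_add_left]
                    ring
                _ = (((0 * (-d) + inner ℝ y u : ℝ)) : EReal)
                      + (((inner ℝ x u : ℝ) - d : ℝ) : EReal) := EReal.coe_add _ _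
                _ ≤ (⨆ m ∈ C, (((0 * m.1 + inner ℝ y m.2 : ℝ)) : EReal)) + φ x :=
                    add_le_add hyS hFY
          exact EReal.sub_le_of_le_add hbc
      · apply iSup₂_le
        rintro ⟨μ, u⟩ hm
        rw [hC] at hm
        simp only [Set.mem_setOf_eq] at hm
        have hcnt : conjFn φ u ≠ ⊤ := by
          intro h
          rw [h, EReal.add_top_of_ne_bot (EReal.coe_ne_bot μ)] at hm
          exact absurd hm (by simp)
        have h0 : ((0:ℝ) * μ + (inner ℝ y u : ℝ)) = (inner ℝ y u : ℝ) := by ring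
        rw [h0]
        exact rec_ge_inner hprop hcnt y
    · -- η < 0
      rw [persp_neg hη]
      symm
      rw [← top_le_iff]
      apply le_of_forall_coe_lt
      intro r _
      obtain ⟨u₀, hu₀⟩ := conj_dom_nonempty hG0
      have hcnb := conj_ne_bot hprop u₀
      set d₀ := (conjFn φ u₀).toReal with hd₀
      have hcd₀ : conjFn φ u₀ = (d₀ : EReal) := (EReal.coe_toReal hu₀ hcnb).symm
      set μ := min (-d₀) ((r + 1 - (inner ℝ y u₀ : ℝ))/η) with hμdef
      have hmC : ((μ, u₀) : ℝ × G) ∈ C := by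
        rw [hC]
        simp only [Set.mem_setOf_eq]
        rw [hcd₀, ← EReal.coe_add, ← EReal.coe_zero, EReal.coe_le_coe_iff]
        have := min_le_left (-d₀) ((r + 1 - (inner ℝ y u₀ : ℝ))/η)
        linarith
      refine le_trans ?_ (le_biSup _ hmC)
      show (r : EReal) ≤ ((η * μ + (inner ℝ y u₀ : ℝ) : ℝ) : EReal)
      rw [EReal.coe_le_coe_iff]
      have h1 : η * ((r + 1 - (inner ℝ y u₀ : ℝ))/η) ≤ η * μ :=
        mul_le_mul_of_nonpos_left (min_le_right _ _) hη.le
      rw [mul_div_cancel₀ _ (ne_of_lt hη)] at h1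
      linarith

end
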